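/- arXiv:1604.03888 — 6 statements merged into one kernel-verified Lean document; each statement's English description precedes it below -/
import Mathlib

section
/- For all integers t ≥ 1, N ≥ 3, and K, one has 2K(K − t) + N(t+1)(tN − 2K + 1) ≥ 0. (Equivalently, K(K − t) + N(t+1)(tN/2 − K + 1/2) ≥ 0.) -/
/-- Key inequality (19): for all integers `t ≥ 1`, `N ≥ 3`, and `K`,
`2K(K − t) + N(t+1)(tN − 2K + 1) ≥ 0`. -/
theorem stmt_3 (t N K : ℤ) (ht : 1 ≤ t) (hN : 3 ≤ N) :
    0 ≤ 2 * K * (K - t) + N * (t + 1) * (t * N - 2 * K + 1) := by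
  rcases eq_or_lt_of_le ht with h1 | h2
  · subst h1
    have h : 0 ≤ (K - N) * (K - N - 1) := by
      rcases le_or_gt K N with h' | h'
      · have := mul_nonneg (show (0:ℤ) ≤ N - K by omega) (show (0:ℤ) ≤ N + 1 - K by omega)
        nlinarith [this]
      · exact mul_nonneg (by omega) (by omega)
    nlinarith [h]
  · have ht2 : 2 ≤ t := h2
    nlinarith [sq_nonneg (2*K - t - N*(t+1)),
      mul_nonneg (show (0:ℤ) ≤ N*(N-2)-3 by nlinarith) (show (0:ℤ) ≤ t^2-1 by nlinarith),
      sq_nonneg t]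
end

section
/- Let t, N, K be integers with t ≥ 1, N ≥ 3, and K ≥ 1, and define α_t = K(K − t)/((t+1)(tN − 1)) − N(K − 1)/(tN − 1). Then α_t ≥ −N/2. -/
/-- For integers `t ≥ 1`, `N ≥ 3`, `K ≥ 1`, the slope
`α_t = K(K − t)/((t+1)(tN − 1)) − N(K − 1)/(tN − 1)` of the memory-sharing line
satisfies `α_t ≥ −N/2`. -/
theorem stmt_6 (t N K : ℤ) (ht : 1 ≤ t) (hN : 3 ≤ N) (hK : 1 ≤ K) :
    -(N : ℝ) / 2 ≤
      (K : ℝ) * ((K : ℝ) - (t : ℝ)) / (((t : ℝ) + 1) * ((t : ℝ) * (N : ℝ) - 1))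
        - (N : ℝ) * ((K : ℝ) - 1) / ((t : ℝ) * (N : ℝ) - 1) := by
  have ht' : (1:ℝ) ≤ (t:ℝ) := by exact_mod_cast ht
  have hN' : (3:ℝ) ≤ (N:ℝ) := by exact_mod_cast hN
  have hK' : (1:ℝ) ≤ (K:ℝ) := by exact_mod_cast hK
  have ha : (0:ℝ) < (t:ℝ) + 1 := by linarith
  have hd : (0:ℝ) < (t:ℝ) * (N:ℝ) - 1 := by nlinarith
  have hQ : (0:ℝ) ≤ 2*(K:ℝ)^2 - 2*(K:ℝ)*((t:ℝ) + ((t:ℝ)+1)*(N:ℝ))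
      + ((t:ℝ)+1)*(N:ℝ)*((t:ℝ)*(N:ℝ)+1) := by
    rcases eq_or_lt_of_le ht with h1 | h2
    · -- t = 1 : Q = 2(K-N)(K-N-1) ≥ 0 by integrality
      subst h1
      have hm : (0:ℤ) ≤ (K - N) * (K - N - 1) := by
        rcases le_or_gt (K - N) 0 with h | h
        · nlinarith [h, (by omega : K - N - 1 ≤ 0)]
        · exact mul_nonneg (by omega) (by omega)
      have hm' : (0:ℝ) ≤ ((K:ℝ) - N) * ((K:ℝ) - N - 1) := by exact_mod_cast hm
      push_cast
      nlinarith [hm']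
    · -- t ≥ 2 : the discriminant is nonpositive
      have ht2 : (2:ℝ) ≤ (t:ℝ) := by exact_mod_cast h2
      have hdisc : (0:ℝ) ≤ 2*((t:ℝ)+1)*(N:ℝ)*((t:ℝ)*(N:ℝ)+1)
          - ((t:ℝ) + ((t:ℝ)+1)*(N:ℝ))^2 := by
        nlinarith [mul_nonneg (mul_nonneg (mul_nonneg ha.le (by linarith : (0:ℝ) ≤ (N:ℝ)))
            (by linarith : (0:ℝ) ≤ (t:ℝ) - 1)) (by linarith : (0:ℝ) ≤ (N:ℝ) - 3),
          mul_nonneg (mul_nonneg ha.le (by linarith : (0:ℝ) ≤ (N:ℝ) - 3))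
            (by linarith : (0:ℝ) ≤ (t:ℝ) - 1),
          sq_nonneg ((t:ℝ) - 2), mul_pos ha hd]
      nlinarith [sq_nonneg (2*(K:ℝ) - ((t:ℝ) + ((t:ℝ)+1)*(N:ℝ))), hdisc]
  rw [div_sub_div _ _ (by positivity) hd.ne', div_le_div_iff₀ (by norm_num) (by positivity)]
  nlinarith [mul_nonneg hQ hd.le]
end

section
/- Let t, N, K be integers with 1 ≤ t ≤ K and K > N ≥ 3, and define α_t = K(K − t)/((t+1)(tN − 1)) − N(K − 1)/(tN − 1) and β_t = N − N/K − (K − t)/((t+1)(tN − 1)) + N(K − 1)/(K(tN − 1)). Then for every real M with 1/K ≤ M ≤ (N−1)/K, one has N(1 − M/2 − 1/(2K)) ≤ α_t·M + β_t. -/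
/-- For integers `1 ≤ t ≤ K` and `K > N ≥ 3`, and every real `M` with
`1/K ≤ M ≤ (N−1)/K`, the proposed scheme's delivery rate `N(1 − M/2 − 1/(2K))`
is at most `α_t·M + β_t`. -/
theorem stmt_9 (t N K : ℤ) (ht : 1 ≤ t) (htK : t ≤ K) (hNK : N < K) (hN : 3 ≤ N)
    (α β : ℝ)
    (hα : α = (K : ℝ) * ((K : ℝ) - (t : ℝ)) / (((t : ℝ) + 1) * ((t : ℝ) * (N : ℝ) - 1))
        - (N : ℝ) * ((K : ℝ) - 1) / ((t : ℝ) * (N : ℝ) - 1))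
    (hβ : β = (N : ℝ) - (N : ℝ) / (K : ℝ)
        - ((K : ℝ) - (t : ℝ)) / (((t : ℝ) + 1) * ((t : ℝ) * (N : ℝ) - 1))
        + (N : ℝ) * ((K : ℝ) - 1) / ((K : ℝ) * ((t : ℝ) * (N : ℝ) - 1)))
    (M : ℝ) (hM1 : 1 / (K : ℝ) ≤ M) (hM2 : M ≤ ((N : ℝ) - 1) / (K : ℝ)) :
    (N : ℝ) * (1 - M / 2 - 1 / (2 * (K : ℝ))) ≤ α * M + β := by
  have ht' : (1:ℝ) ≤ (t:ℝ) := by exact_mod_cast ht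
  have hN' : (3:ℝ) ≤ (N:ℝ) := by exact_mod_cast hN
  have hK' : (N:ℝ) + 1 ≤ (K:ℝ) := by exact_mod_cast hNK
  have hk : (0:ℝ) < (K:ℝ) := by linarith
  have hE : (0:ℝ) < (t:ℝ) * (N:ℝ) - 1 := by nlinarith
  have ha1 : (0:ℝ) < (t:ℝ) + 1 := by linarith
  have hf : 0 ≤ ((t:ℝ)+1)*(N:ℝ)*((t:ℝ)*(N:ℝ)+1-2*(K:ℝ)) + 2*(K:ℝ)*((K:ℝ)-(t:ℝ)) := by
    rcases eq_or_lt_of_le ht with h1 | h2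
    · have h1' : (t:ℝ) = 1 := by exact_mod_cast h1.symm
      rw [h1']
      nlinarith [sq_nonneg ((K:ℝ) - (N:ℝ))]
    · have ha2 : (2:ℝ) ≤ (t:ℝ) := by exact_mod_cast h2
      nlinarith [sq_nonneg (2*(K:ℝ) - ((t:ℝ) + (N:ℝ)*((t:ℝ)+1))),
        mul_nonneg (by nlinarith : (0:ℝ) ≤ (t:ℝ)*(t:ℝ) - 4)
          (by nlinarith : (0:ℝ) ≤ (N:ℝ)*(N:ℝ) - 2*(N:ℝ) - 1)]
  have hslope : 0 ≤ α + (N:ℝ)/2 := by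
    have heq : α + (N:ℝ)/2 =
        (((t:ℝ)+1)*(N:ℝ)*((t:ℝ)*(N:ℝ)+1-2*(K:ℝ)) + 2*(K:ℝ)*((K:ℝ)-(t:ℝ)))
          / (2*(((t:ℝ)+1)*((t:ℝ)*(N:ℝ)-1))) := by
      rw [hα]; field_simp; ring
    rw [heq]
    exact div_nonneg hf (by positivity)
  have hg : α * M + β - (N:ℝ)*(1 - M/2 - 1/(2*(K:ℝ))) = (α + (N:ℝ)/2) * (M - 1/(K:ℝ)) := by
    rw [hα, hβ]; field_simp; ring
  nlinarith [mul_nonneg hslope (by linarith : (0:ℝ) ≤ M - 1/(K:ℝ))]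
end

section
/- Let N and K be integers with N even and K > N ≥ 3, and let M be a real number with 1/K ≤ M ≤ (N−1)/K. Then N(1 − M/2 − 1/(2K)) ≤ 2·(N/4)·(3 − 2M); that is, the delivery rate of the proposed scheme is at most twice the lower-bound value (N/4)(3 − 2M) obtained from the cut-set/Sengupta-type bound with s = N/2 and l = 1 when N is even. -/
/-- Even-`N` multiplicative gap: for integers `N` even with `K > N ≥ 3` and
real `M` with `1/K ≤ M ≤ (N−1)/K`, the proposed delivery rate
`N(1 − M/2 − 1/(2K))` is at most twice the lower bound `(N/4)(3 − 2M)`. -/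
theorem stmt_10 (N K : ℤ) (hEven : Even N) (hNK : N < K) (hN : 3 ≤ N)
    (M : ℝ) (hM1 : 1 / (K : ℝ) ≤ M) (hM2 : M ≤ ((N : ℝ) - 1) / (K : ℝ)) :
    (N : ℝ) * (1 - M / 2 - 1 / (2 * (K : ℝ))) ≤ 2 * (((N : ℝ) / 4) * (3 - 2 * M)) := by
  have hK : (0:ℝ) < (K:ℝ) := by exact_mod_cast lt_of_lt_of_le (by linarith) hNK
  have hNr : (3:ℝ) ≤ (N:ℝ) := by exact_mod_cast hN
  have hNKr : (N:ℝ) < (K:ℝ) := by exact_mod_cast hNK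
  have hM : M < 1 := lt_of_le_of_lt hM2 (by rw [div_lt_one hK]; linarith)
  have : 0 < 1 / (2 * (K:ℝ)) := by positivity
  nlinarith
end

section
/- Let N and K be integers with N odd and K > N ≥ 3, and let M be a real number with 1/K ≤ M ≤ (N−1)/K. Then N(1 − M/2 − 1/(2K)) ≤ 2·(N − ((N−1)/2)·M − (N+1)²/(4N)); that is, the delivery rate of the proposed scheme is at most twice the lower-bound value N − ((N−1)/2)M − (N+1)²/(4N) obtained from the Sengupta-type bound with s = (N−1)/2 and l = 1 when N is odd. -/
/-- Odd-`N` multiplicative gap: for integers `N` odd with `K > N ≥ 3` and real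
`M` with `1/K ≤ M ≤ (N−1)/K`, the proposed delivery rate `N(1 − M/2 − 1/(2K))`
is at most twice the lower bound `N − ((N−1)/2)M − (N+1)²/(4N)`. -/
theorem stmt_11 (N K : ℤ) (hOdd : Odd N) (hNK : N < K) (hN : 3 ≤ N)
    (M : ℝ) (hM1 : 1 / (K : ℝ) ≤ M) (hM2 : M ≤ ((N : ℝ) - 1) / (K : ℝ)) :
    (N : ℝ) * (1 - M / 2 - 1 / (2 * (K : ℝ)))
      ≤ 2 * ((N : ℝ) - (((N : ℝ) - 1) / 2) * M - ((N : ℝ) + 1) ^ 2 / (4 * (N : ℝ))) := by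
  have hNr : (3:ℝ) ≤ (N:ℝ) := by exact_mod_cast hN
  have hKr : (N:ℝ) + 1 ≤ (K:ℝ) := by exact_mod_cast hNK
  have hNpos : (0:ℝ) < (N:ℝ) := by linarith
  have hKpos : (0:ℝ) < (K:ℝ) := by linarith
  have hMK : M * (K:ℝ) ≤ (N:ℝ) - 1 := by
    calc M * (K:ℝ) ≤ ((N:ℝ) - 1) / (K:ℝ) * (K:ℝ) := by
          exact mul_le_mul_of_nonneg_right hM2 hKpos.le
      _ = (N:ℝ) - 1 := by field_simp
  rw [← sub_nonneg]
  have key : 2 * ((N : ℝ) - (((N : ℝ) - 1) / 2) * M - ((N : ℝ) + 1) ^ 2 / (4 * (N : ℝ)))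
      - (N : ℝ) * (1 - M / 2 - 1 / (2 * (K : ℝ)))
      = (4*(N:ℝ)^2*(K:ℝ) + 2*(N:ℝ)*(2-(N:ℝ))*(M*(K:ℝ))
          - 2*(K:ℝ)*((N:ℝ)+1)^2 + 2*(N:ℝ)^2) / (4*(N:ℝ)*(K:ℝ)) := by
    field_simp
    ring
  rw [key]
  apply div_nonneg _ (by positivity)
  nlinarith [mul_nonneg (sub_nonneg.mpr hKr) (by nlinarith : (0:ℝ) ≤ (N:ℝ)^2 - 2*(N:ℝ) - 1),
    mul_nonneg (sub_nonneg.mpr hMK) (by nlinarith : (0:ℝ) ≤ (N:ℝ)*((N:ℝ)-2))]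
end

section
/- Let N and K be integers with K > N ≥ 3, and define f(M) = (2 − M − 1/K) / (2 − (1 − 1/N)·M − (1/2)·(1 + 1/N)²). Then f is monotone nondecreasing on the interval [1/K, (N−1)/K]; that is, for all real M₁, M₂ with 1/K ≤ M₁ ≤ M₂ ≤ (N−1)/K, f(M₁) ≤ f(M₂). -/
/-- Monotonicity of `f(M) = (2 − M − 1/K)/(2 − (1 − 1/N)M − (1/2)(1 + 1/N)²)`
on `[1/K, (N−1)/K]` for integers `K > N ≥ 3`. -/
theorem stmt_12 (N K : ℤ) (hNK : N < K) (hN : 3 ≤ N)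
    (M₁ M₂ : ℝ) (h1 : 1 / (K : ℝ) ≤ M₁) (h12 : M₁ ≤ M₂)
    (h2 : M₂ ≤ ((N : ℝ) - 1) / (K : ℝ)) :
    (2 - M₁ - 1 / (K : ℝ)) / (2 - (1 - 1 / (N : ℝ)) * M₁ - (1 / 2) * (1 + 1 / (N : ℝ)) ^ 2)
      ≤ (2 - M₂ - 1 / (K : ℝ)) /
        (2 - (1 - 1 / (N : ℝ)) * M₂ - (1 / 2) * (1 + 1 / (N : ℝ)) ^ 2) := by
  have hN3 : (3:ℝ) ≤ (N:ℝ) := by exact_mod_cast hN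
  have hK1 : (N:ℝ) + 1 ≤ (K:ℝ) := by exact_mod_cast hNK
  have hN0 : (0:ℝ) < (N:ℝ) := by linarith
  have hK0 : (0:ℝ) < (K:ℝ) := by linarith
  have hNinv : 1 / (N:ℝ) ≤ 1/3 := by
    rw [div_le_div_iff₀ hN0 (by norm_num)]; linarith
  have hNinv0 : 0 < 1 / (N:ℝ) := by positivity
  have hKinv0 : 0 < 1 / (K:ℝ) := by positivity
  have hM2 : M₂ < 1 := by
    have : ((N:ℝ) - 1) / (K:ℝ) < 1 := by
      rw [div_lt_one hK0]; linarith
    linarith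
  have hD2 : 0 < 2 - (1 - 1 / (N : ℝ)) * M₂ - (1 / 2) * (1 + 1 / (N : ℝ)) ^ 2 := by
    nlinarith [mul_pos hNinv0 hKinv0, sq_nonneg (1 / (N:ℝ))]
  have hD1 : 0 < 2 - (1 - 1 / (N : ℝ)) * M₁ - (1 / 2) * (1 + 1 / (N : ℝ)) ^ 2 := by
    nlinarith
  rw [div_le_div_iff₀ hD1 hD2]
  have key : 0 ≤ (1/2) * (1 - 1/(N:ℝ))^2 - (1 - 1/(N:ℝ)) / (K:ℝ) := by
    have h1K : 1 / (K:ℝ) ≤ ((N:ℝ) - 1) / (2 * (N:ℝ)) := by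
      rw [div_le_div_iff₀ hK0 (by positivity)]; nlinarith
    have hNe : ((N:ℝ) - 1) / (2 * (N:ℝ)) = (1/2) * (1 - 1/(N:ℝ)) := by
      field_simp
    have h1N : (0:ℝ) ≤ 1 - 1/(N:ℝ) := by linarith
    rw [hNe] at h1K
    have := mul_le_mul_of_nonneg_left h1K h1N
    calc (0:ℝ) ≤ (1 - 1/(N:ℝ)) * ((1/2) * (1 - 1/(N:ℝ))) - (1 - 1/(N:ℝ)) * (1/(K:ℝ)) := by
          linarith
      _ = (1/2) * (1 - 1/(N:ℝ))^2 - (1 - 1/(N:ℝ)) / (K:ℝ) := by ring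
  have expand : (2 - M₂ - 1 / (K:ℝ)) * (2 - (1 - 1 / (N : ℝ)) * M₁ - (1 / 2) * (1 + 1 / (N : ℝ)) ^ 2)
      - (2 - M₁ - 1 / (K:ℝ)) * (2 - (1 - 1 / (N : ℝ)) * M₂ - (1 / 2) * (1 + 1 / (N : ℝ)) ^ 2)
      = (M₂ - M₁) * ((1/2) * (1 - 1/(N:ℝ))^2 - (1 - 1/(N:ℝ)) / (K:ℝ)) := by ring
  nlinarith [mul_nonneg (sub_nonneg.2 h12) key]
end
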